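/- Two-sided evaluation of the partition function: for integers m, n ≥ 1 and y = (y_{−m},…,y_n) ∈ {−1,1}^{m+n+1}, define the backward fields w_i^{(n)} by w_i^{(n)} = 0 for i > n and w_i^{(n)} = K·y_i + A(w_{i+1}^{(n)}) for 1 ≤ i ≤ n, and the forward fields v_j by v_{−m} = K·y_{−m} and v_{j+1} = K·y_{j+1} + A(v_j) for j = −m,…,−2. Then Z_{−m,n}(y) = 2·cosh( K·y_0 + A(v_{−1}) + A(w_1^{(n)}) )·exp( Σ_{j=−m}^{−1} B(v_j) + Σ_{i=1}^{n} B(w_i^{(n)}) ). -/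
import Mathlib
open Finset

noncomputable def sp19 (b : Bool) : ℝ := if b then 1 else -1
noncomputable def Af19 (J u : ℝ) : ℝ := (1/2) * Real.log (Real.cosh (u+J) / Real.cosh (u-J))
noncomputable def Bf19 (J u : ℝ) : ℝ := (1/2) * Real.log (4 * Real.cosh (u+J) * Real.cosh (u-J))
noncomputable def Zf19 (J : ℝ) (L : ℕ) (h : ℕ → ℝ) : ℝ :=
  ∑ x : Fin (L+1) → Bool, Real.exp (J * ∑ i : Fin L, sp19 (x i.castSucc) * sp19 (x i.succ)
    + ∑ i : Fin (L+1), h i * sp19 (x i))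

lemma sum_pi_cons19 (L : ℕ) (f : (Fin (L+1) → Bool) → ℝ) :
    ∑ x : Fin (L+1) → Bool, f x = ∑ b : Bool, ∑ x' : Fin L → Bool, f (Fin.cons b x') := by
  rw [← (Fin.consEquiv (fun _ : Fin (L+1) => Bool)).sum_comp]
  rw [Fintype.sum_prod_type]; rfl

lemma sum_pi_snoc19 (L : ℕ) (f : (Fin (L+1) → Bool) → ℝ) :
    ∑ x : Fin (L+1) → Bool, f x = ∑ b : Bool, ∑ x' : Fin L → Bool, f (Fin.snoc x' b) := by
  rw [← (Fin.snocEquiv (fun _ : Fin (L+1) => Bool)).sum_comp]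
  rw [Fintype.sum_prod_type]; rfl

lemma Af19_zero (J : ℝ) : Af19 J 0 = 0 := by
  unfold Af19
  rw [zero_add, zero_sub, Real.cosh_neg, div_self (Real.cosh_pos _).ne', Real.log_one, mul_zero]

lemma key19 (J h t : ℝ) (ht : t = 1 ∨ t = -1) :
    Real.exp (J * t + h) + Real.exp (-(J * t + h)) = Real.exp (Bf19 J h + Af19 J h * t) := by
  have c1 : (0:ℝ) < Real.cosh (h + J) := Real.cosh_pos _
  have c2 : (0:ℝ) < Real.cosh (h - J) := Real.cosh_pos _
  have l4 : Real.log 4 = 2 * Real.log 2 := by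
    rw [show (4:ℝ) = 2^2 by norm_num, Real.log_pow]; push_cast; ring
  rcases ht with rfl | rfl
  · have e : Bf19 J h + Af19 J h * 1 = Real.log (2 * Real.cosh (h + J)) := by
      unfold Bf19 Af19
      rw [Real.log_mul (by positivity) c2.ne', Real.log_mul (by norm_num) c1.ne',
          Real.log_mul (by norm_num) c1.ne', Real.log_div c1.ne' c2.ne', l4]
      ring
    rw [e, Real.exp_log (by positivity), Real.cosh_eq,
        show J * 1 + h = h + J by ring]
    ring
  · have e : Bf19 J h + Af19 J h * (-1) = Real.log (2 * Real.cosh (h - J)) := by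
      unfold Bf19 Af19
      rw [Real.log_mul (by positivity) c2.ne', Real.log_mul (by norm_num) c1.ne',
          Real.log_mul (by norm_num) c2.ne', Real.log_div c1.ne' c2.ne', l4]
      ring
    rw [e, Real.exp_log (by positivity), Real.cosh_eq,
        show J * (-1) + h = h - J by ring]
    ring

lemma sp19_pm (b : Bool) : sp19 b = 1 ∨ sp19 b = -1 := by
  cases b <;> simp [sp19]

lemma Z_left_peel19 (J : ℝ) (L : ℕ) (h : ℕ → ℝ) :
    Zf19 J (L+1) h = Real.exp (Bf19 J (h 0)) *
      Zf19 J L (Function.update (fun k => h (k+1)) 0 (h 1 + Af19 J (h 0))) := by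
  unfold Zf19
  rw [sum_pi_cons19]
  have step : ∀ (b : Bool) (x' : Fin (L+1) → Bool),
      (J * ∑ i : Fin (L+1), sp19 ((Fin.cons b x' : Fin (L+1+1) → Bool) i.castSucc) * sp19 ((Fin.cons b x' : Fin (L+1+1) → Bool) i.succ)
        + ∑ i : Fin (L+1+1), h i * sp19 ((Fin.cons b x' : Fin (L+1+1) → Bool) i))
      = (J * (sp19 b * sp19 (x' 0)) + h 0 * sp19 b)
        + (J * ∑ i : Fin L, sp19 (x' i.castSucc) * sp19 (x' i.succ)
           + ∑ i : Fin (L+1), h (↑i + 1) * sp19 (x' i)) := by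
    intro b x'
    rw [Fin.sum_univ_succ (f := fun i : Fin (L+1) =>
          sp19 ((Fin.cons b x' : Fin (L+1+1) → Bool) i.castSucc) * sp19 ((Fin.cons b x' : Fin (L+1+1) → Bool) i.succ)),
        Fin.sum_univ_succ (f := fun i : Fin (L+1+1) => h i * sp19 ((Fin.cons b x' : Fin (L+1+1) → Bool) i))]
    simp only [Fin.castSucc_zero, Fin.cons_zero, Fin.cons_succ, ← Fin.succ_castSucc,
      Fin.val_succ, Fin.val_zero]
    ring
  calc ∑ b : Bool, ∑ x' : Fin (L+1) → Bool,
        Real.exp (J * ∑ i : Fin (L+1), sp19 ((Fin.cons b x' : Fin (L+1+1) → Bool) i.castSucc) * sp19 ((Fin.cons b x' : Fin (L+1+1) → Bool) i.succ)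
          + ∑ i : Fin (L+1+1), h i * sp19 ((Fin.cons b x' : Fin (L+1+1) → Bool) i))
      = ∑ x' : Fin (L+1) → Bool, ∑ b : Bool,
        Real.exp ((J * (sp19 b * sp19 (x' 0)) + h 0 * sp19 b))
          * Real.exp ((J * ∑ i : Fin L, sp19 (x' i.castSucc) * sp19 (x' i.succ)
           + ∑ i : Fin (L+1), h (↑i + 1) * sp19 (x' i))) := by
        rw [Finset.sum_comm]
        refine Finset.sum_congr rfl fun x' _ => Finset.sum_congr rfl fun b _ => ?_
        rw [step b x', Real.exp_add]
    _ = ∑ x' : Fin (L+1) → Bool,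
        Real.exp (Bf19 J (h 0) + Af19 J (h 0) * sp19 (x' 0))
          * Real.exp ((J * ∑ i : Fin L, sp19 (x' i.castSucc) * sp19 (x' i.succ)
           + ∑ i : Fin (L+1), h (↑i + 1) * sp19 (x' i))) := by
        refine Finset.sum_congr rfl fun x' _ => ?_
        rw [← Finset.sum_mul, Fintype.sum_bool]
        congr 1
        rw [show sp19 true = 1 from rfl, show sp19 false = -1 from rfl,
            show J * (1 * sp19 (x' 0)) + h 0 * 1 = J * sp19 (x' 0) + h 0 by ring,
            show J * (-1 * sp19 (x' 0)) + h 0 * (-1) = -(J * sp19 (x' 0) + h 0) by ring]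
        exact key19 J (h 0) (sp19 (x' 0)) (sp19_pm _)
    _ = Real.exp (Bf19 J (h 0)) * ∑ x' : Fin (L+1) → Bool,
        Real.exp (J * ∑ i : Fin L, sp19 (x' i.castSucc) * sp19 (x' i.succ)
          + ∑ i : Fin (L+1), (Function.update (fun k => h (k+1)) 0 (h 1 + Af19 J (h 0))) i
              * sp19 (x' i)) := by
        rw [Finset.mul_sum]
        refine Finset.sum_congr rfl fun x' _ => ?_
        rw [← Real.exp_add, ← Real.exp_add]
        congr 1
        rw [Fin.sum_univ_succ (f := fun i : Fin (L+1) =>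
              (Function.update (fun k => h (k+1)) 0 (h 1 + Af19 J (h 0))) i * sp19 (x' i)),
            Fin.sum_univ_succ (f := fun i : Fin (L+1) => h (↑i + 1) * sp19 (x' i))]
        simp only [Fin.val_zero, Fin.val_succ, Function.update_self,
          Function.update_of_ne (Nat.succ_ne_zero _), Nat.succ_eq_add_one]
        ring

lemma Z_right_peel19 (J : ℝ) (L : ℕ) (h : ℕ → ℝ) :
    Zf19 J (L+1) h = Real.exp (Bf19 J (h (L+1))) *
      Zf19 J L (Function.update h L (h L + Af19 J (h (L+1)))) := by
  unfold Zf19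
  rw [sum_pi_snoc19]
  have step : ∀ (b : Bool) (x' : Fin (L+1) → Bool),
      (J * ∑ i : Fin (L+1), sp19 ((Fin.snoc x' b : Fin (L+1+1) → Bool) i.castSucc)
            * sp19 ((Fin.snoc x' b : Fin (L+1+1) → Bool) i.succ)
        + ∑ i : Fin (L+1+1), h i * sp19 ((Fin.snoc x' b : Fin (L+1+1) → Bool) i))
      = (J * (sp19 (x' (Fin.last L)) * sp19 b) + h (L+1) * sp19 b)
        + (J * ∑ i : Fin L, sp19 (x' i.castSucc) * sp19 (x' i.succ)
           + ∑ i : Fin (L+1), h i * sp19 (x' i)) := by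
    intro b x'
    rw [Fin.sum_univ_castSucc (f := fun i : Fin (L+1) =>
          sp19 ((Fin.snoc x' b : Fin (L+1+1) → Bool) i.castSucc)
            * sp19 ((Fin.snoc x' b : Fin (L+1+1) → Bool) i.succ)),
        Fin.sum_univ_castSucc (f := fun i : Fin (L+1+1) =>
          h i * sp19 ((Fin.snoc x' b : Fin (L+1+1) → Bool) i))]
    simp only [Fin.succ_castSucc, Fin.snoc_castSucc, Fin.succ_last, Fin.snoc_last,
      Fin.coe_castSucc, Fin.val_last]
    ring
  calc ∑ b : Bool, ∑ x' : Fin (L+1) → Bool,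
        Real.exp (J * ∑ i : Fin (L+1), sp19 ((Fin.snoc x' b : Fin (L+1+1) → Bool) i.castSucc)
            * sp19 ((Fin.snoc x' b : Fin (L+1+1) → Bool) i.succ)
          + ∑ i : Fin (L+1+1), h i * sp19 ((Fin.snoc x' b : Fin (L+1+1) → Bool) i))
      = ∑ x' : Fin (L+1) → Bool, ∑ b : Bool,
        Real.exp ((J * (sp19 (x' (Fin.last L)) * sp19 b) + h (L+1) * sp19 b))
          * Real.exp ((J * ∑ i : Fin L, sp19 (x' i.castSucc) * sp19 (x' i.succ)
           + ∑ i : Fin (L+1), h i * sp19 (x' i))) := by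
        rw [Finset.sum_comm]
        refine Finset.sum_congr rfl fun x' _ => Finset.sum_congr rfl fun b _ => ?_
        rw [step b x', Real.exp_add]
    _ = ∑ x' : Fin (L+1) → Bool,
        Real.exp (Bf19 J (h (L+1)) + Af19 J (h (L+1)) * sp19 (x' (Fin.last L)))
          * Real.exp ((J * ∑ i : Fin L, sp19 (x' i.castSucc) * sp19 (x' i.succ)
           + ∑ i : Fin (L+1), h i * sp19 (x' i))) := by
        refine Finset.sum_congr rfl fun x' _ => ?_
        rw [← Finset.sum_mul, Fintype.sum_bool]
        congr 1
        rw [show sp19 true = 1 from rfl, show sp19 false = -1 from rfl,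
            show J * (sp19 (x' (Fin.last L)) * 1) + h (L+1) * 1
              = J * sp19 (x' (Fin.last L)) + h (L+1) by ring,
            show J * (sp19 (x' (Fin.last L)) * (-1)) + h (L+1) * (-1)
              = -(J * sp19 (x' (Fin.last L)) + h (L+1)) by ring]
        exact key19 J (h (L+1)) (sp19 (x' (Fin.last L))) (sp19_pm _)
    _ = Real.exp (Bf19 J (h (L+1))) * ∑ x' : Fin (L+1) → Bool,
        Real.exp (J * ∑ i : Fin L, sp19 (x' i.castSucc) * sp19 (x' i.succ)
          + ∑ i : Fin (L+1), (Function.update h L (h L + Af19 J (h (L+1)))) i * sp19 (x' i)) := by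
        rw [Finset.mul_sum]
        refine Finset.sum_congr rfl fun x' _ => ?_
        rw [← Real.exp_add, ← Real.exp_add]
        congr 1
        rw [Fin.sum_univ_castSucc (f := fun i : Fin (L+1) =>
              (Function.update h L (h L + Af19 J (h (L+1)))) i * sp19 (x' i)),
            Fin.sum_univ_castSucc (f := fun i : Fin (L+1) => h i * sp19 (x' i))]
        have hupd :
            (∑ i : Fin L, (Function.update h L (h L + Af19 J (h (L+1)))) ((i.castSucc : Fin (L+1)) : ℕ) * sp19 (x' i.castSucc))
              = ∑ i : Fin L, h ((i.castSucc : Fin (L+1)) : ℕ) * sp19 (x' i.castSucc) := by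
          refine Finset.sum_congr rfl fun i _ => ?_
          rw [Fin.coe_castSucc, Function.update_of_ne (Nat.ne_of_lt i.isLt)]
        rw [hupd]
        simp only [Fin.val_last, Function.update_self]
        ring

lemma Zf19_congr (J : ℝ) (L : ℕ) (h1 h2 : ℕ → ℝ) (hh : ∀ k, k ≤ L → h1 k = h2 k) :
    Zf19 J L h1 = Zf19 J L h2 := by
  unfold Zf19
  refine Finset.sum_congr rfl fun x _ => ?_
  congr 1
  congr 1
  refine Finset.sum_congr rfl fun i _ => ?_
  rw [hh i (Nat.lt_succ_iff.mp i.isLt)]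

lemma Zf19_zero (J : ℝ) (h : ℕ → ℝ) : Zf19 J 0 h = 2 * Real.cosh (h 0) := by
  unfold Zf19
  rw [sum_pi_cons19, Fintype.sum_bool]
  simp only [Finset.univ_unique, Finset.sum_singleton, Finset.univ_eq_empty,
    Finset.sum_empty, mul_zero, zero_add]
  rw [Fin.sum_univ_one, Fin.sum_univ_one]
  simp only [Fin.cons_zero, Fin.val_zero]
  rw [show sp19 true = 1 from rfl, show sp19 false = -1 from rfl, Real.cosh_eq]
  ring

lemma Z_right_iter19 (J : ℝ) : ∀ (b a : ℕ) (h W : ℕ → ℝ),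
    W (a+b+1) = h (a+b+1) →
    (∀ i, a+1 ≤ i → i ≤ a+b → W i = h i + Af19 J (W (i+1))) →
    Zf19 J (a+b+1) h = Real.exp (∑ i ∈ Finset.Icc (a+1) (a+b+1), Bf19 J (W i)) *
      Zf19 J a (Function.update h a (h a + Af19 J (W (a+1)))) := by
  intro b
  induction b with
  | zero =>
    intro a h W htop _
    simp only [Nat.add_zero] at htop ⊢
    rw [Z_right_peel19, Finset.Icc_self, Finset.sum_singleton, htop]
  | succ b ih =>
    intro a h W htop hrec
    have h1 : Zf19 J (a+(b+1)+1) h = Real.exp (Bf19 J (h (a+b+1+1))) *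
        Zf19 J (a+b+1) (Function.update h (a+b+1) (h (a+b+1) + Af19 J (h (a+b+1+1)))) := by
      have := Z_right_peel19 J (a+b+1) h
      convert this using 3 <;> omega
    set h' := Function.update h (a+b+1) (h (a+b+1) + Af19 J (h (a+b+1+1))) with hh'
    have htop2 : W (a+b+1+1) = h (a+b+1+1) := by
      rw [show a+b+1+1 = a+(b+1)+1 by ring]; exact htop
    have htop' : W (a+b+1) = h' (a+b+1) := by
      rw [hh', Function.update_self, hrec (a+b+1) (by omega) (by omega), htop2]
    have hrec' : ∀ i, a+1 ≤ i → i ≤ a+b → W i = h' i + Af19 J (W (i+1)) := by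
      intro i hi1 hi2
      rw [hh', Function.update_of_ne (by omega)]
      exact hrec i hi1 (by omega)
    have h2 := ih a h' W htop' hrec'
    rw [h1, h2]
    have e1 : Zf19 J a (Function.update h' a (h' a + Af19 J (W (a+1))))
        = Zf19 J a (Function.update h a (h a + Af19 J (W (a+1)))) := by
      apply Zf19_congr
      intro k hk
      by_cases hka : k = a
      · subst hka
        rw [Function.update_self, Function.update_self, hh',
          Function.update_of_ne (by omega)]
      · rw [Function.update_of_ne hka, Function.update_of_ne hka, hh',
          Function.update_of_ne (by omega)]
    rw [e1, ← mul_assoc, ← Real.exp_add]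
    congr 2
    rw [show a+(b+1)+1 = a+b+1+1 by ring,
      Finset.sum_Icc_succ_top (by omega : a+1 ≤ a+b+1+1), htop2]
    ring

lemma Z_left_eval19 (J : ℝ) : ∀ (L : ℕ) (h V : ℕ → ℝ), V 0 = h 0 →
    (∀ i, i < L → V (i+1) = h (i+1) + Af19 J (V i)) →
    Zf19 J L h = 2 * Real.cosh (V L) * Real.exp (∑ i ∈ Finset.range L, Bf19 J (V i)) := by
  intro L
  induction L with
  | zero =>
    intro h V h0 _
    rw [Zf19_zero, h0]
    simp
  | succ L ih =>
    intro h V h0 hrec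
    rw [Z_left_peel19]
    set h' := Function.update (fun k => h (k+1)) 0 (h 1 + Af19 J (h 0)) with hh'
    have h2 := ih h' (fun i => V (i+1)) ?_ ?_
    · have h2' : Zf19 J L h' = 2 * Real.cosh (V (L+1)) *
          Real.exp (∑ i ∈ Finset.range L, Bf19 J (V (i+1))) := h2
      rw [h2', Finset.sum_range_succ' (fun i => Bf19 J (V i)) L]
      rw [Real.exp_add, ← h0]
      ring
    · show V (0+1) = h' 0
      rw [hh', Function.update_self, hrec 0 (by omega), h0]
    · intro i hi
      show V (i+1+1) = h' (i+1) + Af19 J (V (i+1))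
      rw [hh', Function.update_of_ne (Nat.succ_ne_zero i)]
      exact hrec (i+1) (by omega)

/-- two-sided evaluation of the partition function: for integers
`m, n ≥ 1` and `y = (y_{−m},…,y_n) ∈ {−1,1}^{m+n+1}`, with backward fields `w_i^{(n)}`
(`w_i^{(n)} = 0` for `i > n`, `w_i^{(n)} = K·y_i + A(w_{i+1}^{(n)})` for `1 ≤ i ≤ n`)
and forward fields `v_j` (`v_{−m} = K·y_{−m}`, `v_{j+1} = K·y_{j+1} + A(v_j)` for
`j = −m,…,−2`), one has
`Z_{−m,n}(y) = 2·cosh(K·y_0 + A(v_{−1}) + A(w_1^{(n)}))·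
   exp(Σ_{j=−m}^{−1} B(v_j) + Σ_{i=1}^{n} B(w_i^{(n)}))`.
Spin configurations `x ∈ {−1,1}^{m+n+1}` are encoded by `x : Fin (m+n+1) → Bool` via
`spin`, the entry `x_k` of the configuration sitting at site `k − m ∈ [−m, n]`. -/
theorem stmt_19 (p ε : ℝ) (hp0 : 0 < p) (hp1 : p < 1) (hε0 : 0 < ε) (hε1 : ε < 1)
    (J K : ℝ)
    (hJ : J = (1 / 2) * Real.log ((1 - p) / p))
    (hK : K = (1 / 2) * Real.log ((1 - ε) / ε))
    (A B : ℝ → ℝ)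
    (hA : ∀ u, A u = (1 / 2) * Real.log (Real.cosh (u + J) / Real.cosh (u - J)))
    (hB : ∀ u, B u = (1 / 2) * Real.log (4 * Real.cosh (u + J) * Real.cosh (u - J)))
    (spin : Bool → ℝ) (hspin : ∀ bb, spin bb = if bb then 1 else -1)
    (m n : ℕ) (hm : 1 ≤ m) (hn : 1 ≤ n)
    (y : ℤ → ℝ) (hy : ∀ i ∈ Finset.Icc (-(m : ℤ)) (n : ℤ), y i = 1 ∨ y i = -1)
    (w : ℤ → ℝ)
    (hwzero : ∀ i : ℤ, (n : ℤ) < i → w i = 0)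
    (hwrec : ∀ i : ℤ, 1 ≤ i → i ≤ (n : ℤ) → w i = K * y i + A (w (i + 1)))
    (v : ℤ → ℝ)
    (hvinit : v (-(m : ℤ)) = K * y (-(m : ℤ)))
    (hvrec : ∀ j : ℤ, -(m : ℤ) ≤ j → j ≤ -2 → v (j + 1) = K * y (j + 1) + A (v j)) :
    (∑ x : Fin (m + n + 1) → Bool,
        Real.exp (J * ∑ i : Fin (m + n), spin (x i.castSucc) * spin (x i.succ)
          + K * ∑ i : Fin (m + n + 1), spin (x i) * y ((i : ℤ) - (m : ℤ))))
      = 2 * Real.cosh (K * y 0 + A (v (-1)) + A (w 1)) *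
        Real.exp ((∑ j ∈ Finset.Icc (-(m : ℤ)) (-1 : ℤ), B (v j))
          + ∑ i ∈ Finset.Icc (1 : ℤ) (n : ℤ), B (w i)) := by
  have hsp : spin = sp19 := funext fun b => by rw [hspin]; rfl
  have hAf : A = Af19 J := funext fun u => by rw [hA u]; rfl
  have hBf : B = Bf19 J := funext fun u => by rw [hB u]; rfl
  subst hsp hAf hBf
  obtain ⟨n', rfl⟩ : ∃ n', n = n' + 1 := ⟨n - 1, by omega⟩
  set h : ℕ → ℝ := fun k => K * y ((k : ℤ) - (m : ℤ)) with hdefh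
  set W : ℕ → ℝ := fun k => w ((k : ℤ) - (m : ℤ)) with hdefW
  -- rewrite the LHS as Zf19
  have hLHS : (∑ x : Fin (m + (n'+1) + 1) → Bool,
        Real.exp (J * ∑ i : Fin (m + (n'+1)), sp19 (x i.castSucc) * sp19 (x i.succ)
          + K * ∑ i : Fin (m + (n'+1) + 1), sp19 (x i) * y ((i : ℤ) - (m : ℤ))))
      = Zf19 J (m + n' + 1) h := by
    unfold Zf19
    refine Finset.sum_congr rfl fun x _ => ?_
    congr 1
    congr 1
    rw [Finset.mul_sum]
    refine Finset.sum_congr rfl fun i _ => ?_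
    rw [hdefh]; ring
  rw [hLHS]
  -- right iteration
  have htop : W (m + n' + 1) = h (m + n' + 1) := by
    show w (((m + n' + 1 : ℕ) : ℤ) - (m : ℤ)) = K * y (((m + n' + 1 : ℕ) : ℤ) - (m : ℤ))
    have e : ((m + n' + 1 : ℕ) : ℤ) - (m : ℤ) = ((n' + 1 : ℕ) : ℤ) := by push_cast; ring
    rw [e, hwrec ((n' + 1 : ℕ) : ℤ) (by push_cast; omega) (by push_cast; omega),
      hwzero (((n' + 1 : ℕ) : ℤ) + 1) (by push_cast; omega), Af19_zero, add_zero]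
  have hiter : ∀ i, m + 1 ≤ i → i ≤ m + n' → W i = h i + Af19 J (W (i + 1)) := by
    intro i h1 h2
    show w (((i : ℕ) : ℤ) - (m : ℤ))
      = K * y (((i : ℕ) : ℤ) - (m : ℤ)) + Af19 J (w (((i + 1 : ℕ) : ℤ) - (m : ℤ)))
    have e : ((i + 1 : ℕ) : ℤ) - (m : ℤ) = ((i : ℕ) : ℤ) - (m : ℤ) + 1 := by push_cast; ring
    rw [e]
    exact hwrec ((i : ℤ) - (m : ℤ)) (by omega) (by push_cast; omega)
  rw [Z_right_iter19 J n' m h W htop hiter]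
  set h₁ : ℕ → ℝ := Function.update h m (h m + Af19 J (W (m + 1))) with hdefh1
  -- left evaluation
  set V : ℕ → ℝ := fun k =>
    if k = m then (h m + Af19 J (W (m + 1))) + Af19 J (v (-1)) else v ((k : ℤ) - (m : ℤ))
    with hdefV
  have hV0 : V 0 = h₁ 0 := by
    rw [hdefV, hdefh1, Function.update_of_ne (by omega), hdefh]
    simp only [if_neg (by omega : ¬ (0 : ℕ) = m)]
    have e : ((0 : ℕ) : ℤ) - (m : ℤ) = -(m : ℤ) := by push_cast; ring
    rw [e, hvinit]
  have hVrec : ∀ i, i < m → V (i + 1) = h₁ (i + 1) + Af19 J (V i) := by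
    intro i hi
    by_cases him : i + 1 = m
    · have eV1 : V (i + 1) = h m + Af19 J (W (m + 1)) + Af19 J (v (-1)) := by
        rw [him]; show (if m = m then _ else _) = _; rw [if_pos rfl]
      have eV2 : V i = v (-1) := by
        show (if i = m then _ else _) = _
        rw [if_neg (by omega)]
        congr 1
        omega
      have eh1 : h₁ (i + 1) = h m + Af19 J (W (m + 1)) := by
        rw [him]; show Function.update h m _ m = _; rw [Function.update_self]
      rw [eV1, eV2, eh1]
    · have eV1 : V (i + 1) = v (((i : ℕ) : ℤ) - (m : ℤ) + 1) := by
        show (if i + 1 = m then _ else _) = _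
        rw [if_neg him]
        congr 1
        push_cast; ring
      have eV2 : V i = v (((i : ℕ) : ℤ) - (m : ℤ)) := by
        show (if i = m then _ else _) = _
        rw [if_neg (by omega)]
      have eh1 : h₁ (i + 1) = K * y (((i : ℕ) : ℤ) - (m : ℤ) + 1) := by
        show Function.update h m _ (i + 1) = _
        rw [Function.update_of_ne him]
        show K * y _ = _
        congr 2
        push_cast; ring
      rw [eV1, eV2, eh1]
      exact hvrec ((i : ℤ) - (m : ℤ)) (by omega) (by omega)
  rw [Z_left_eval19 J m h₁ V hV0 hVrec]
  -- compute V m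
  have hVm : V m = K * y 0 + Af19 J (v (-1)) + Af19 J (w 1) := by
    show (if m = m then h m + Af19 J (W (m + 1)) + Af19 J (v (-1)) else _) = _
    rw [if_pos rfl]
    show K * y (((m : ℕ) : ℤ) - (m : ℤ)) + Af19 J (w (((m + 1 : ℕ) : ℤ) - (m : ℤ)))
        + Af19 J (v (-1)) = _
    have e0 : ((m : ℕ) : ℤ) - (m : ℤ) = 0 := by push_cast; ring
    have e1 : ((m + 1 : ℕ) : ℤ) - (m : ℤ) = 1 := by push_cast; ring
    rw [e0, e1]
    ring
  rw [hVm]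
  -- reindex the two sums
  have hsum1 : (∑ i ∈ Finset.range m, Bf19 J (V i))
      = ∑ j ∈ Finset.Icc (-(m : ℤ)) (-1 : ℤ), Bf19 J (v j) := by
    refine Finset.sum_nbij' (i := fun a => (a : ℤ) - (m : ℤ)) (j := fun b => (b + m).toNat)
      ?_ ?_ ?_ ?_ ?_
    · intro a ha; simp only [Finset.mem_range] at ha; simp only [Finset.mem_Icc]; omega
    · intro b hb; simp only [Finset.mem_Icc] at hb; simp only [Finset.mem_range]; omega
    · intro a ha; simp only [Finset.mem_range] at ha
      show (((a : ℤ) - (m : ℤ) + (m : ℤ)).toNat) = a; omega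
    · intro b hb; simp only [Finset.mem_Icc] at hb
      show (((b + (m : ℤ)).toNat : ℕ) : ℤ) - (m : ℤ) = b; omega
    · intro a ha
      simp only [Finset.mem_range] at ha
      show Bf19 J (V a) = Bf19 J (v ((a : ℤ) - (m : ℤ)))
      congr 1
      show (if a = m then _ else _) = _
      rw [if_neg (by omega)]
  have hsum2 : (∑ i ∈ Finset.Icc (m + 1) (m + n' + 1), Bf19 J (W i))
      = ∑ i ∈ Finset.Icc (1 : ℤ) ((n' + 1 : ℕ) : ℤ), Bf19 J (w i) := by
    refine Finset.sum_nbij' (i := fun a => (a : ℤ) - (m : ℤ)) (j := fun b => (b + m).toNat)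
      ?_ ?_ ?_ ?_ ?_
    · intro a ha; simp only [Finset.mem_Icc] at ha; simp only [Finset.mem_Icc]; push_cast; omega
    · intro b hb; simp only [Finset.mem_Icc] at hb; simp only [Finset.mem_Icc]; push_cast at hb ⊢; omega
    · intro a ha; simp only [Finset.mem_Icc] at ha
      show (((a : ℤ) - (m : ℤ) + (m : ℤ)).toNat) = a; omega
    · intro b hb; simp only [Finset.mem_Icc] at hb
      show (((b + (m : ℤ)).toNat : ℕ) : ℤ) - (m : ℤ) = b; omega
    · intro a ha; rfl
  rw [hsum1, hsum2, Real.exp_add,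
    show K * y 0 + Af19 J (v (-1)) + Af19 J (w 1)
      = K * y 0 + Af19 J (v (-1)) + Af19 J (w 1) from rfl]
  ring
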